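/- Fix integers k > ℓ ≥ 2, a real ε > 0, and a real c ≥ 1/(k−ℓ). Let n be a positive integer, let r = cn (rounded to an integer), and suppose p = p(n) satisfies p ≤ (1−ε)·e^{k−ℓ+1}/n^{k−ℓ} in the case c = 1/(k−ℓ), and p ≤ (1−ε)·((c−1/(k−ℓ))/c)^{(k−ℓ)c−1}·e^{k−ℓ+1}/n^{k−ℓ} in the case c > 1/(k−ℓ). Then with high probability the randomly colored random hypergraph H^{(k)}_{n,p,r} contains no rainbow ℓ-Hamilton cycle. -/

import Mathlib

open Finset Filter

/-- Weight of a single coordinate in the randomly colored random hypergraph: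
the value `none` (edge absent) has probability `1 - p`, and each color `some c`
has probability `p / r`. -/
noncomputable def colorWeight (p : ℝ) (r : ℕ) : Option (Fin r) → ℝ
  | none => 1 - p
  | some _ => p / r

/-- A configuration of the randomly colored random `k`-uniform hypergraph on vertex set
`Fin n` with color set `Fin r`: each `k`-element subset is either absent (`none`) or
present with some color. -/
abbrev HypConf (k n r : ℕ) := {s : Finset (Fin n) // s.card = k} → Option (Fin r)

open scoped Classical in
/-- The probability of the event `A` in the model `H^{(k)}_{n,p,r}`: k-sets appear
independently with probability `p` and get independent uniform colors from `Fin r`. -/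
noncomputable def hypProb (k n r : ℕ) (p : ℝ) (A : Set (HypConf k n r)) : ℝ :=
  ∑ ω ∈ Finset.univ.filter (fun ω => ω ∈ A), ∏ e, colorWeight p r (ω e)

/-- The `i`-th edge (0-indexed) of the `ℓ`-Hamilton cycle induced by the permutation `σ`:
`E_σ(i) = {σ(i(k-ℓ)+j mod n) : 0 ≤ j < k}`. -/
def hamEdge (k l : ℕ) {n : ℕ} (hn : 0 < n) (σ : Equiv.Perm (Fin n)) (i : ℕ) :
    Finset (Fin n) :=
  (Finset.range k).image fun j => σ ⟨(i * (k - l) + j) % n, Nat.mod_lt _ hn⟩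

/-- The permutation `σ` induces a rainbow `ℓ`-Hamilton cycle in the configuration `ω`,
with edge `i` present and colored `col i`, all colors pairwise distinct. -/
def IsRainbowHamPerm (k l : ℕ) {n r : ℕ} (ω : HypConf k n r) (hn : 0 < n)
    (σ : Equiv.Perm (Fin n)) (col : ℕ → Fin r) : Prop :=
  (∀ i < n / (k - l), ∃ he : (hamEdge k l hn σ i).card = k,
      ω ⟨hamEdge k l hn σ i, he⟩ = some (col i)) ∧
  ∀ i < n / (k - l), ∀ j < n / (k - l), i ≠ j → col i ≠ col j

/-- The colored hypergraph `ω` contains a rainbow `ℓ`-Hamilton cycle. -/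
def HasRainbowHamCycle (k l : ℕ) {n r : ℕ} (ω : HypConf k n r) : Prop :=
  ∃ (hn : 0 < n) (σ : Equiv.Perm (Fin n)) (col : ℕ → Fin r),
    IsRainbowHamPerm k l ω hn σ col

/-!
First moment method. A rainbow `ℓ`-Hamilton cycle is witnessed by a cyclic order `σ` of the
vertices together with an injective colouring of its `m = ⌊n/(k-ℓ)⌋` edges, and each witness
is present with probability `(p/r)^m`; hence a rainbow cycle exists with probability at most
`n! · r(r-1)⋯(r-m+1) · (p/r)^m`. Stirling-type bounds turn this into
`e² n^(k-ℓ) r · (p n^(k-ℓ) / e^(k-ℓ+1))^m · (r/d)^d` with `d = r - m`.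
For `c = 1/(k-ℓ)` we have `d ≤ 1`, and for `c > 1/(k-ℓ)` the factor `(r/d)^d` is, up to a
constant, `γ^(-βm)`, where `γ^β = ((c - 1/(k-ℓ))/c)^((k-ℓ)c-1)` is exactly the extra factor in
the bound on `p`. Either way what remains is a polynomial in `n` times `(1-ε)^m`, which tends
to `0`.
-/

open Nat Real

section Model

variable {k n r : ℕ} {p : ℝ}

theorem colorWeight_nonneg (hp0 : 0 ≤ p) (hp1 : p ≤ 1) (x : Option (Fin r)) :
    0 ≤ colorWeight p r x := by
  cases x with
  | none => exact sub_nonneg.2 hp1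
  | some _ => exact div_nonneg hp0 r.cast_nonneg

theorem sum_colorWeight (hr : r ≠ 0) : ∑ x, colorWeight p r x = 1 := by
  have hr' : (r : ℝ) ≠ 0 := Nat.cast_ne_zero.2 hr
  simp [Fintype.sum_option, colorWeight, mul_div_cancel₀ _ hr']

theorem hypProb_eq_sum_indicator (A : Set (HypConf k n r)) :
    hypProb k n r p A = ∑ ω, A.indicator (fun ω => ∏ e, colorWeight p r (ω e)) ω := by
  classical
  simp only [hypProb, Finset.sum_filter, Set.indicator_apply]

theorem hypProb_nonneg (hp0 : 0 ≤ p) (hp1 : p ≤ 1) (A : Set (HypConf k n r)) :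
    0 ≤ hypProb k n r p A :=
  sum_nonneg fun _ _ => prod_nonneg fun _ _ => colorWeight_nonneg hp0 hp1 _

theorem hypProb_setOf_forall_mem
    (t : {s : Finset (Fin n) // s.card = k} → Finset (Option (Fin r))) :
    hypProb k n r p {ω | ∀ e, ω e ∈ t e} = ∏ e, ∑ x ∈ t e, colorWeight p r x := by
  rw [prod_univ_sum, hypProb]
  congr 1
  ext ω
  simp [Fintype.mem_piFinset]

theorem hypProb_compl (hr : r ≠ 0) (P : HypConf k n r → Prop) :
    hypProb k n r p {ω | ¬ P ω} = 1 - hypProb k n r p {ω | P ω} := by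
  have huniv := hypProb_setOf_forall_mem (k := k) (n := n) (r := r) (p := p) fun _ => univ
  simp only [mem_univ, sum_colorWeight hr, prod_const_one] at huniv
  rw [eq_sub_iff_add_eq', ← huniv]
  simp only [hypProb_eq_sum_indicator, ← sum_add_distrib]
  congr 1 with ω
  by_cases h : P ω <;> simp [h]

theorem hypProb_le_sum_of_subset_iUnion {ι : Type*} [Fintype ι] (hp0 : 0 ≤ p) (hp1 : p ≤ 1)
    {E : Set (HypConf k n r)} (A : ι → Set (HypConf k n r)) (hE : E ⊆ ⋃ i, A i) :
    hypProb k n r p E ≤ ∑ i, hypProb k n r p (A i) := by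
  simp only [hypProb_eq_sum_indicator]
  rw [sum_comm]
  refine sum_le_sum fun ω _ => ?_
  have hw : 0 ≤ ∏ e, colorWeight p r (ω e) :=
    prod_nonneg fun _ _ => colorWeight_nonneg hp0 hp1 _
  by_cases hω : ω ∈ E
  · obtain ⟨i, hi⟩ := Set.mem_iUnion.1 (hE hω)
    rw [Set.indicator_of_mem hω,
      ← Set.indicator_of_mem hi fun ω => ∏ e, colorWeight p r (ω e)]
    exact single_le_sum (fun j _ => Set.indicator_nonneg (fun _ _ => hw) _) (mem_univ i)
  · rw [Set.indicator_of_notMem hω]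
    exact sum_nonneg fun j _ => Set.indicator_nonneg (fun _ _ => hw) _

theorem hypProb_setOf_forall_apply_eq {ι : Type*} [Fintype ι] (hr : r ≠ 0)
    {e : ι → {s : Finset (Fin n) // s.card = k}} (he : Function.Injective e)
    (v : ι → Option (Fin r)) :
    hypProb k n r p {ω | ∀ i, ω (e i) = v i} = ∏ i, colorWeight p r (v i) := by
  classical
  set t := Function.extend e (fun i => ({v i} : Finset (Option (Fin r)))) fun _ => univ
  have hset : {ω : HypConf k n r | ∀ i, ω (e i) = v i} = {ω | ∀ E, ω E ∈ t E} := by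
    ext ω
    refine ⟨fun h E => ?_, fun h i => by simpa [t, he.extend_apply] using h (e i)⟩
    by_cases hE : ∃ i, e i = E
    · obtain ⟨i, rfl⟩ := hE
      simp [t, he.extend_apply, h i]
    · simp [t, Function.extend_apply' _ _ _ hE]
  rw [hset, hypProb_setOf_forall_mem, ← prod_subset (subset_univ (univ.map ⟨e, he⟩)),
    prod_map]
  · simp [t, he.extend_apply]
  · intro E _ hE
    have hE' : ¬ ∃ i, e i = E := by simpa using hE
    simp [t, Function.extend_apply' _ _ _ hE', sum_colorWeight hr]

end Model

theorem mod_eq_of_image_add_mod_eq {n k s t : ℕ} (hk : 0 < k) (hkn : k < n)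
    (h : (range k).image (fun a => (s + a) % n) = (range k).image (fun a => (t + a) % n)) :
    s % n = t % n := by
  have hwin : ∀ x, (∃ a < k, (s + a) % n = x) ↔ ∃ b < k, (t + b) % n = x := fun x => by
    simpa using congrArg (x ∈ ·) h
  obtain ⟨b, hb, hts⟩ := (hwin _).1 ⟨0, hk, rfl⟩
  rcases b with _ | b
  · simpa using hts.symm
  -- `t + b` precedes `s` in the window of `t`, so it lies in the window of `s`,
  -- which forces `n ∣ a + 1` for some `a < k`.
  obtain ⟨a, ha, hst⟩ := (hwin _).2 ⟨b, by omega, rfl⟩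
  rw [← ZMod.natCast_eq_natCast_iff'] at hts hst
  push_cast at hts hst
  have hdvd : n ∣ a + 1 :=
    (ZMod.natCast_eq_zero_iff _ _).1 (by push_cast; linear_combination hst + hts)
  exact absurd (Nat.le_of_dvd (by omega) hdvd) (by omega)

theorem image_symm_hamEdge {k l n : ℕ} (hn : 0 < n) (σ : Equiv.Perm (Fin n)) (i : ℕ) :
    (hamEdge k l hn σ i).image (fun x => (σ.symm x : ℕ)) =
      (range k).image fun a => (i * (k - l) + a) % n := by
  simp [hamEdge, image_image, Function.comp_def]

theorem hamEdge_injOn {k l n : ℕ} (hkn : k < n) (hn : 0 < n) (σ : Equiv.Perm (Fin n)) :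
    Set.InjOn (hamEdge k l hn σ) (Set.Iio (n / (k - l))) := by
  intro i hi j hj hij
  have hK : 0 < k - l := Nat.pos_of_ne_zero fun h => by simp [h] at hi
  have hstart : ∀ {i}, i < n / (k - l) → i * (k - l) < n := fun hi => by
    have := (Nat.le_div_iff_mul_le hK).1 hi
    nlinarith
  have hmod := mod_eq_of_image_add_mod_eq (by omega) hkn <| by
    simpa only [image_symm_hamEdge] using congrArg (image fun x => (σ.symm x : ℕ)) hij
  rw [Nat.mod_eq_of_lt (hstart hi), Nat.mod_eq_of_lt (hstart hj)] at hmod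
  exact Nat.eq_of_mul_eq_mul_right hK hmod

theorem hypProb_hasRainbowHamCycle_le {k l n r : ℕ} {p : ℝ} (hkn : k < n) (hr : r ≠ 0)
    (hp0 : 0 ≤ p) (hp1 : p ≤ 1) :
    hypProb k n r p {ω | HasRainbowHamCycle k l ω} ≤
      n ! * r.descFactorial (n / (k - l)) * (p / r) ^ (n / (k - l)) := by
  set m := n / (k - l)
  have hn : 0 < n := by omega
  let A : Equiv.Perm (Fin n) × (Fin m ↪ Fin r) → Set (HypConf k n r) := fun t =>
    {ω | ∀ i : Fin m, ∃ he, ω ⟨hamEdge k l hn t.1 i, he⟩ = some (t.2 i)}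
  have hcover : {ω | HasRainbowHamCycle k l ω} ⊆ ⋃ t, A t := by
    rintro ω ⟨_, σ, col, hcol, hdist⟩
    refine Set.mem_iUnion.2
      ⟨⟨σ, fun i => col i, fun i j hij => ?_⟩, fun i => hcol i i.isLt⟩
    by_contra hne
    exact hdist i i.isLt j j.isLt (Fin.val_ne_of_ne hne) hij
  have hA : ∀ t, hypProb k n r p (A t) ≤ (p / r) ^ m := by
    rintro ⟨σ, col⟩
    by_cases hcard : ∀ i : Fin m, (hamEdge k l hn σ i).card = k
    · have hinj : Function.Injective fun i : Fin m =>
          (⟨hamEdge k l hn σ i, hcard i⟩ : {s : Finset (Fin n) // s.card = k}) :=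
        fun i j hij => Fin.ext <| hamEdge_injOn hkn hn σ i.isLt j.isLt (congrArg Subtype.val hij)
      have hAt :
          A (σ, col) = {ω | ∀ i, ω ⟨hamEdge k l hn σ i, hcard i⟩ = some (col i)} := by
        ext ω
        exact forall_congr' fun i => ⟨fun ⟨_, h⟩ => h, fun h => ⟨hcard i, h⟩⟩
      simp [hAt, hypProb_setOf_forall_apply_eq hr hinj, colorWeight, div_pow]
    · obtain ⟨i, hi⟩ := not_forall.1 hcard
      have hAt : A (σ, col) = ∅ := Set.eq_empty_of_forall_notMem fun ω hω => hi (hω i).1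
      simp only [hAt, hypProb_eq_sum_indicator, Set.indicator_empty, sum_const_zero]
      positivity
  calc hypProb k n r p {ω | HasRainbowHamCycle k l ω}
      ≤ ∑ t, hypProb k n r p (A t) := hypProb_le_sum_of_subset_iUnion hp0 hp1 A hcover
    _ ≤ ∑ _t : Equiv.Perm (Fin n) × (Fin m ↪ Fin r), (p / r) ^ m :=
      sum_le_sum fun t _ => hA t
    _ = n ! * r.descFactorial m * (p / r) ^ m := by
      simp [Fintype.card_perm, Fintype.card_embedding_eq]

theorem factorial_le_exp_mul_pow {n : ℕ} (hn : n ≠ 0) :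
    (n ! : ℝ) ≤ exp 1 * n * (n / exp 1) ^ n := by
  have hseq : Stirling.stirlingSeq n ≤ exp 1 / √2 := by
    obtain ⟨n, rfl⟩ := exists_eq_succ_of_ne_zero hn
    simpa using Stirling.stirlingSeq'_antitone (zero_le n)
  have hsqrt : √(2 * n : ℝ) ≤ √2 * n := by
    rw [sqrt_mul zero_le_two]
    gcongr
    exact sqrt_le_self_iff.2 (Or.inr (by exact_mod_cast one_le_iff_ne_zero.2 hn))
  rw [Stirling.stirlingSeq, div_le_iff₀ (by positivity)] at hseq
  calc (n ! : ℝ) ≤ exp 1 / √2 * (√(2 * n) * (n / exp 1) ^ n) := hseq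
    _ ≤ exp 1 / √2 * (√2 * n * (n / exp 1) ^ n) := by gcongr
    _ = exp 1 * n * (n / exp 1) ^ n := by field_simp

theorem pow_div_exp_le_factorial (n : ℕ) : ((n : ℝ) / exp 1) ^ n ≤ n ! := by
  have h := pow_div_factorial_le_exp _ n.cast_nonneg n
  rw [div_le_iff₀ (by positivity), ← exp_one_pow] at h
  rw [div_pow, div_le_iff₀ (by positivity)]
  linarith

theorem factorial_le_exp_mul_pow_mul_pow_div {n K : ℕ} (hK : 0 < K) (hn : n ≠ 0) :
    (n ! : ℝ) ≤ exp 1 * n ^ K * ((n : ℝ) ^ K / exp 1 ^ K) ^ (n / K) := by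
  have hn1 : (1 : ℝ) ≤ n := by exact_mod_cast one_le_iff_ne_zero.2 hn
  have hrem : (n : ℝ) * (n / exp 1) ^ (n % K) ≤ n ^ K :=
    calc (n : ℝ) * (n / exp 1) ^ (n % K) ≤ n * n ^ (n % K) := by
          gcongr
          exact div_le_self (by positivity) (one_le_exp zero_le_one)
      _ = n ^ (n % K + 1) := by ring
      _ ≤ n ^ K := pow_le_pow_right₀ hn1 (mod_lt n hK)
  calc (n ! : ℝ) ≤ exp 1 * n * (n / exp 1) ^ n := factorial_le_exp_mul_pow hn
    _ = exp 1 * (n * (n / exp 1) ^ (n % K)) * ((n / exp 1) ^ K) ^ (n / K) := by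
      have hsplit :
          ((n : ℝ) / exp 1) ^ n = (n / exp 1) ^ (n % K) * ((n / exp 1) ^ K) ^ (n / K) := by
        rw [← pow_mul, ← pow_add, mod_add_div]
      rw [hsplit]
      ring
    _ ≤ exp 1 * n ^ K * ((n / exp 1) ^ K) ^ (n / K) := by gcongr
    _ = exp 1 * n ^ K * ((n : ℝ) ^ K / exp 1 ^ K) ^ (n / K) := by rw [div_pow]

theorem descFactorial_le_exp_mul_pow {r : ℕ} (hr : r ≠ 0) (m : ℕ) :
    (r.descFactorial m : ℝ) ≤
      exp 1 * r * ((r : ℝ) / (r - m : ℕ)) ^ (r - m) * (r / exp 1) ^ m := by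
  rcases le_or_gt m r with hmr | hrm
  · set d := r - m
    have hd : 0 < ((d : ℝ) / exp 1) ^ d := by
      rcases eq_or_ne d 0 with h | h
      · simp [h]
      · positivity
    have hfac : (d ! : ℝ) * r.descFactorial m = r ! := by
      exact_mod_cast factorial_mul_descFactorial hmr
    have hsplit : ((r : ℝ) / exp 1) ^ r = ((r : ℝ) / exp 1) ^ d * (r / exp 1) ^ m := by
      rw [← pow_add, Nat.sub_add_cancel hmr]
    calc (r.descFactorial m : ℝ) = r ! / d ! := by
          rw [← hfac, mul_div_cancel_left₀ _ (by positivity)]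
      _ ≤ exp 1 * r * ((r : ℝ) / exp 1) ^ r / ((d : ℝ) / exp 1) ^ d :=
          div_le_div₀ (by positivity) (factorial_le_exp_mul_pow hr) hd
            (pow_div_exp_le_factorial d)
      _ = exp 1 * r * ((r : ℝ) / d) ^ d * (r / exp 1) ^ m := by
          rw [hsplit, ← div_div_div_cancel_right₀ (exp_pos 1).ne' (r : ℝ) d, div_pow _ _ d]
          ring
  · rw [(descFactorial_eq_zero_iff_lt).2 hrm, cast_zero]
    positivity

theorem factorial_mul_descFactorial_mul_div_pow_le {n K r : ℕ} {x C : ℝ} (hK : 0 < K)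
    (hn : n ≠ 0) (hr : r ≠ 0) (hx : 0 ≤ x) (hxC : x ≤ C / n ^ K) :
    n ! * r.descFactorial (n / K) * (x / r) ^ (n / K) ≤
      exp 1 ^ 2 * n ^ K * r * ((r : ℝ) / (r - n / K : ℕ)) ^ (r - n / K) *
        (C / exp 1 ^ (K + 1)) ^ (n / K) := by
  set m := n / K
  calc (n ! : ℝ) * r.descFactorial m * (x / r) ^ m
      ≤ (exp 1 * n ^ K * ((n : ℝ) ^ K / exp 1 ^ K) ^ m) *
          (exp 1 * r * ((r : ℝ) / (r - m : ℕ)) ^ (r - m) * (r / exp 1) ^ m) *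
          (C / n ^ K / r) ^ m := by
        gcongr
        · exact factorial_le_exp_mul_pow_mul_pow_div hK hn
        · exact descFactorial_le_exp_mul_pow hr m
    _ = exp 1 ^ 2 * n ^ K * r * ((r : ℝ) / (r - m : ℕ)) ^ (r - m) *
          ((n : ℝ) ^ K / exp 1 ^ K * (r / exp 1) * (C / n ^ K / r)) ^ m := by
        rw [mul_pow, mul_pow]
        ring
    _ = exp 1 ^ 2 * n ^ K * r * ((r : ℝ) / (r - m : ℕ)) ^ (r - m) *
          (C / exp 1 ^ (K + 1)) ^ m := by
        congr 2
        have : (n : ℝ) ≠ 0 := cast_ne_zero.2 hn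
        have : (r : ℝ) ≠ 0 := cast_ne_zero.2 hr
        field_simp
        ring

theorem abs_sub_lt_one_of_eq_floor_or_ceil {x : ℝ} {r : ℕ} (hx : 0 ≤ x)
    (h : r = ⌊x⌋₊ ∨ r = ⌈x⌉₊) : |(r : ℝ) - x| < 1 := by
  rw [abs_sub_lt_iff]
  rcases h with rfl | rfl
  · exact ⟨by linarith [Nat.floor_le hx], by linarith [Nat.lt_floor_add_one x]⟩
  · exact ⟨by linarith [Nat.ceil_lt_add_one hx], by linarith [Nat.le_ceil x]⟩

theorem div_pow_le_exp_sub {a : ℝ} (ha : 0 ≤ a) (b : ℕ) : (a / b) ^ b ≤ exp (a - b) := by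
  rcases eq_or_ne b 0 with rfl | hb
  · simpa using one_le_exp ha
  have hb' : (0 : ℝ) < b := by positivity
  have hab : a / b = (a - b) / b + 1 := by field_simp; ring
  calc (a / b) ^ b ≤ exp ((a - b) / b) ^ b := by
        gcongr
        exact hab.trans_le (add_one_le_exp _)
    _ = exp (a - b) := by rw [← exp_nat_mul]; field_simp

theorem tendsto_pow_mul_pow_div_atTop_nhds_zero {K : ℕ} (hK : 0 < K) (j : ℕ) {q : ℝ}
    (hq0 : 0 < q) (hq1 : q < 1) :
    Tendsto (fun n : ℕ => (n : ℝ) ^ j * q ^ (n / K)) atTop (nhds 0) := by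
  set s := q ^ ((K : ℝ)⁻¹)
  have hs0 : 0 < s := rpow_pos_of_pos hq0 _
  have hs1 : s < 1 := rpow_lt_one hq0.le hq1 (by positivity)
  have hsK : s ^ K = q := rpow_inv_natCast_pow hq0.le hK.ne'
  have hlim : Tendsto (fun n : ℕ => q⁻¹ * ((n : ℝ) ^ j * s ^ n)) atTop (nhds 0) := by
    simpa using (tendsto_pow_const_mul_const_pow_of_abs_lt_one j
      (by rwa [abs_of_pos hs0])).const_mul q⁻¹
  refine squeeze_zero (fun n => by positivity) (fun n => ?_) hlim
  have hpow : q ^ (n / K) * q ≤ s ^ n := by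
    rw [← pow_succ, ← hsK, ← pow_mul]
    exact pow_le_pow_of_le_one hs0.le hs1.le (Nat.lt_mul_div_succ n hK).le
  rw [← mul_assoc, mul_comm q⁻¹, mul_assoc]
  gcongr
  rwa [le_inv_mul_iff₀ hq0, mul_comm]

-- With `γ = 1 - 1/κ` and `d = r - m`, write `(r/d)^d = γ^(-d) (γr/d)^d`: the powers of `γ`
-- combine to `γ^(κm - r)`, bounded since `r ≈ κm`, and `(γr/d)^d ≤ e^(γr - d) ≤ e`.
theorem rpow_pow_mul_div_sub_pow_le {κ : ℝ} (hκ : 1 < κ) {m r : ℕ} (hlo : κ * m - 1 ≤ r)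
    (hhi : r ≤ κ * (m + 1) + 1) :
    ((1 - 1 / κ) ^ (κ - 1)) ^ m * ((r : ℝ) / (r - m : ℕ)) ^ (r - m) ≤
      (1 - 1 / κ) ^ (-(κ + 1)) * exp 1 := by
  have hκ0 : 0 < κ := by linarith
  set γ := 1 - 1 / κ
  have hγ0 : 0 < γ := sub_pos.2 ((div_lt_one hκ0).2 hκ)
  have hγ1 : γ ≤ 1 := sub_le_self _ (by positivity)
  have hmr : m ≤ r := by
    have : (m : ℝ) < r + 1 := by nlinarith [m.cast_nonneg (α := ℝ)]
    exact Nat.lt_succ_iff.1 (by exact_mod_cast this)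
  set d := r - m
  have hd : (d : ℝ) = r - m := by simp [d, Nat.cast_sub hmr]
  have hsplit : ((r : ℝ) / d) ^ d = γ⁻¹ ^ d * (γ * r / d) ^ d := by
    rw [← mul_pow, mul_div_assoc, inv_mul_cancel_left₀ hγ0.ne']
  have hγpow : (γ ^ (κ - 1)) ^ m * γ⁻¹ ^ d = γ ^ ((κ - 1) * m + -(d : ℝ)) := by
    rw [rpow_add hγ0, rpow_mul_natCast hγ0.le, rpow_neg hγ0.le, rpow_natCast, inv_pow]
  have hexp : -(κ + 1) ≤ (κ - 1) * m + -(d : ℝ) := by rw [hd]; nlinarith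
  have hexp' : γ * r - d ≤ 1 := by
    have : m - 1 ≤ r / κ := by rw [le_div_iff₀ hκ0]; nlinarith
    calc γ * r - d = m - r / κ := by rw [hd]; ring
      _ ≤ 1 := by linarith
  calc (γ ^ (κ - 1)) ^ m * ((r : ℝ) / d) ^ d
      = γ ^ ((κ - 1) * m + -(d : ℝ)) * (γ * r / d) ^ d := by rw [hsplit, ← mul_assoc, hγpow]
    _ ≤ γ ^ (-(κ + 1)) * exp (γ * r - d) :=
        mul_le_mul (rpow_le_rpow_of_exponent_ge hγ0 hγ1 hexp)
          (div_pow_le_exp_sub (by positivity) d) (by positivity) (by positivity)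
    _ ≤ γ ^ (-(κ + 1)) * exp 1 := by gcongr

theorem eventually_ne_zero_of_abs_sub_mul_lt_one {c : ℝ} (hc : 0 < c) {r : ℕ → ℕ}
    (hr : ∀ n, |(r n : ℝ) - c * n| < 1) : ∀ᶠ n in atTop, r n ≠ 0 := by
  filter_upwards [(tendsto_natCast_atTop_atTop.const_mul_atTop hc).eventually_ge_atTop 1]
    with n hn hrn
  linarith [(abs_sub_lt_iff.1 (hr n)).2, show (r n : ℝ) = 0 by simp [hrn]]

theorem eventually_div_sub_pow_le_two_mul {K : ℕ} (hK : 0 < K) {r : ℕ → ℕ}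
    (hr : ∀ n, |(r n : ℝ) - 1 / K * n| < 1) :
    ∀ᶠ n in atTop, ((r n : ℝ) / (r n - n / K : ℕ)) ^ (r n - n / K) ≤ 2 * n := by
  filter_upwards [eventually_ge_atTop 1] with n hn
  have hK' : (0 : ℝ) < K := by exact_mod_cast hK
  have hlo : ((n / K : ℕ) : ℝ) ≤ 1 / K * n := by
    rw [one_div_mul_eq_div]; exact Nat.cast_div_le
  have hhi : 1 / K * (n : ℝ) < (n / K : ℕ) + 1 := by
    rw [one_div_mul_eq_div, div_lt_iff₀ hK']
    exact_mod_cast (Nat.lt_mul_div_succ n hK).trans_eq (mul_comm _ _)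
  have hrn := abs_sub_lt_iff.1 (hr n)
  have hmr : n / K < r n + 1 := by
    exact_mod_cast (show ((n / K : ℕ) : ℝ) < r n + 1 by linarith)
  have hrm : r n < n / K + 2 := by
    exact_mod_cast (show (r n : ℝ) < (n / K : ℕ) + 2 by linarith)
  have hmn := Nat.div_le_self n K
  obtain hd | hd : r n - n / K = 0 ∨ r n - n / K = 1 := by omega
  · rw [hd, pow_zero]
    exact_mod_cast (by omega : 1 ≤ 2 * n)
  · rw [hd, Nat.cast_one, div_one, pow_one]
    exact_mod_cast (by omega : r n ≤ 2 * n)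

theorem eventually_rpow_pow_mul_div_sub_pow_le {K : ℕ} (hK : 0 < K) {c : ℝ} (hc : 1 / K < c)
    {r : ℕ → ℕ} (hr : ∀ n, |(r n : ℝ) - c * n| < 1) :
    ∀ᶠ n in atTop, (((c - 1 / K) / c) ^ ((K : ℝ) * c - 1)) ^ (n / K) *
        ((r n : ℝ) / (r n - n / K : ℕ)) ^ (r n - n / K) ≤
      ((c - 1 / K) / c) ^ (-((K : ℝ) * c + 1)) * exp 1 * n := by
  filter_upwards [eventually_ge_atTop 1] with n hn
  have hK' : (0 : ℝ) < K := by exact_mod_cast hK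
  have hc0 : 0 < c := (one_div_pos.2 hK').trans hc
  have hκ : 1 < (K : ℝ) * c := by rwa [div_lt_iff₀' hK'] at hc
  have hγ : (c - 1 / K) / c = 1 - 1 / (K * c) := by field_simp
  have hKm : (K : ℝ) * (n / K : ℕ) ≤ n := by exact_mod_cast Nat.mul_div_le n K
  have hKm' : (n : ℝ) ≤ K * ((n / K : ℕ) + 1) := by
    exact_mod_cast (Nat.lt_mul_div_succ n hK).le
  have hrn := abs_sub_lt_iff.1 (hr n)
  rw [hγ]
  calc _ ≤ (1 - 1 / (K * c)) ^ (-((K : ℝ) * c + 1)) * exp 1 :=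
        rpow_pow_mul_div_sub_pow_le hκ (by nlinarith) (by nlinarith)
    _ ≤ _ := by
        refine le_mul_of_one_le_right (mul_nonneg (rpow_nonneg ?_ _) (exp_pos 1).le)
          (by exact_mod_cast hn)
        rw [sub_nonneg, div_le_one (by linarith)]
        exact hκ.le

theorem tendsto_hypProb_hasRainbowHamCycle_zero {k l : ℕ} (hkl : l < k) {ε c g B : ℝ}
    (hε : 0 < ε) (hc : 0 < c) (hg : 0 ≤ g) {r : ℕ → ℕ}
    (hr : ∀ n, |(r n : ℝ) - c * n| < 1)
    {p : ℕ → ℝ} (hp01 : ∀ n, 0 ≤ p n ∧ p n ≤ 1)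
    (hp : ∀ n, 0 < n → p n ≤ (1 - ε) * g * exp 1 ^ (k - l + 1) / (n : ℝ) ^ (k - l))
    (hgap : ∀ᶠ n in atTop, g ^ (n / (k - l)) *
      ((r n : ℝ) / (r n - n / (k - l) : ℕ)) ^ (r n - n / (k - l)) ≤ B * n) :
    Tendsto (fun n => hypProb k n (r n) (p n) {ω | HasRainbowHamCycle k l ω})
      atTop (nhds 0) := by
  set K := k - l
  have hK : 0 < K := Nat.sub_pos_of_lt hkl
  set q := max (1 - ε) (1 / 2)
  have hq0 : 0 < q := lt_max_of_lt_right (by norm_num)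
  have hq1 : q < 1 := max_lt (by linarith) (by norm_num)
  have hbound : ∀ᶠ n in atTop, hypProb k n (r n) (p n) {ω | HasRainbowHamCycle k l ω} ≤
      exp 1 ^ 2 * (c + 1) * B * ((n : ℝ) ^ (K + 2) * q ^ (n / K)) := by
    filter_upwards [eventually_gt_atTop k, eventually_ne_zero_of_abs_sub_mul_lt_one hc hr, hgap]
      with n hkn hrn hgapn
    have hn : n ≠ 0 := by omega
    have hpq : p n ≤ q * g * exp 1 ^ (K + 1) / (n : ℝ) ^ K :=
      (hp n (by omega)).trans (by gcongr; exact le_max_left _ _)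
    have hrc : (r n : ℝ) ≤ (c + 1) * n := by
      have hn1 : (1 : ℝ) ≤ n := by exact_mod_cast Nat.one_le_iff_ne_zero.2 hn
      linarith [(abs_sub_lt_iff.1 (hr n)).1]
    calc hypProb k n (r n) (p n) {ω | HasRainbowHamCycle k l ω}
        ≤ n ! * (r n).descFactorial (n / K) * (p n / r n) ^ (n / K) :=
          hypProb_hasRainbowHamCycle_le hkn hrn (hp01 n).1 (hp01 n).2
      _ ≤ exp 1 ^ 2 * n ^ K * r n * ((r n : ℝ) / (r n - n / K : ℕ)) ^ (r n - n / K) *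
            (q * g * exp 1 ^ (K + 1) / exp 1 ^ (K + 1)) ^ (n / K) :=
          factorial_mul_descFactorial_mul_div_pow_le hK hn hrn (hp01 n).1 hpq
      _ = exp 1 ^ 2 * n ^ K * r n * q ^ (n / K) *
            (g ^ (n / K) * ((r n : ℝ) / (r n - n / K : ℕ)) ^ (r n - n / K)) := by
          rw [mul_div_cancel_right₀ _ (by positivity), mul_pow]
          ring
      _ ≤ exp 1 ^ 2 * n ^ K * ((c + 1) * n) * q ^ (n / K) * (B * n) := by gcongr
      _ = exp 1 ^ 2 * (c + 1) * B * ((n : ℝ) ^ (K + 2) * q ^ (n / K)) := by ring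
  refine squeeze_zero' (Eventually.of_forall fun n => hypProb_nonneg (hp01 n).1 (hp01 n).2 _)
    hbound ?_
  simpa only [mul_zero] using
    (tendsto_pow_mul_pow_div_atTop_nhds_zero hK (K + 2) hq0 hq1).const_mul (exp 1 ^ 2 * (c + 1) * B)

theorem rainbow_hamilton_zero_statement_general
    (k l : ℕ) (hkl : l < k) (ε : ℝ) (hε : 0 < ε)
    (c : ℝ) (hc : 1 / ((k : ℝ) - l) ≤ c)
    (r : ℕ → ℕ) (hr : ∀ n, r n = ⌊c * n⌋₊ ∨ r n = ⌈c * n⌉₊)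
    (p : ℕ → ℝ) (hp01 : ∀ n, 0 ≤ p n ∧ p n ≤ 1)
    (hpeq : c = 1 / ((k : ℝ) - l) →
      ∀ n, 0 < n → p n ≤ (1 - ε) * Real.exp 1 ^ (k - l + 1) / (n : ℝ) ^ (k - l))
    (hpgt : 1 / ((k : ℝ) - l) < c →
      ∀ n, 0 < n → p n ≤ (1 - ε) * ((c - 1 / ((k : ℝ) - l)) / c) ^ (((k : ℝ) - l) * c - 1) *
        Real.exp 1 ^ (k - l + 1) / (n : ℝ) ^ (k - l)) :
    Tendsto (fun n => hypProb k n (r n) (p n) {ω | ¬ HasRainbowHamCycle k l ω})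
      atTop (nhds 1) := by
  have hK : 0 < k - l := Nat.sub_pos_of_lt hkl
  rw [← Nat.cast_sub hkl.le] at hc hpeq hpgt
  have hc0 : 0 < c := (one_div_pos.2 (by exact_mod_cast hK)).trans_le hc
  have hrc : ∀ n, |(r n : ℝ) - c * n| < 1 :=
    fun n => abs_sub_lt_one_of_eq_floor_or_ceil (by positivity) (hr n)
  have hcycle : Tendsto (fun n => hypProb k n (r n) (p n) {ω | HasRainbowHamCycle k l ω})
      atTop (nhds 0) := by
    rcases hc.eq_or_lt with hceq | hclt
    · subst hceq
      refine tendsto_hypProb_hasRainbowHamCycle_zero (B := 2) hkl hε hc0 zero_le_one hrc hp01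
        (by simpa only [mul_one] using hpeq rfl) ?_
      simpa only [one_pow, one_mul] using eventually_div_sub_pow_le_two_mul hK hrc
    · exact tendsto_hypProb_hasRainbowHamCycle_zero hkl hε hc0
        (rpow_nonneg (div_nonneg (sub_nonneg.2 hclt.le) hc0.le) _) hrc hp01 (hpgt hclt)
        (eventually_rpow_pow_mul_div_sub_pow_le hK hclt hrc)
  have hlim : Tendsto (fun n => 1 - hypProb k n (r n) (p n) {ω | HasRainbowHamCycle k l ω})
      atTop (nhds 1) := by
    simpa using (tendsto_const_nhds (x := (1 : ℝ))).sub hcycle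
  refine hlim.congr' ?_
  filter_upwards [eventually_ne_zero_of_abs_sub_mul_lt_one hc0 hrc] with n hn
  exact (hypProb_compl hn _).symm

/-- For fixed integers `k > ℓ ≥ 2`, `ε > 0` and `c ≥ 1/(k-ℓ)`, with
`r = cn` (rounded up or down), if `p = p(n)` is at most `(1-ε)e^{k-ℓ+1}/n^{k-ℓ}` when
`c = 1/(k-ℓ)`, and at most `(1-ε)((c-1/(k-ℓ))/c)^{(k-ℓ)c-1} e^{k-ℓ+1}/n^{k-ℓ}` when
`c > 1/(k-ℓ)`, then whp `H^{(k)}_{n,p,r}` contains no rainbow `ℓ`-Hamilton cycle. -/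
theorem rainbow_hamilton_zero_statement
    (k l : ℕ) (hl : 2 ≤ l) (hkl : l < k) (ε : ℝ) (hε : 0 < ε)
    (c : ℝ) (hc : 1 / ((k : ℝ) - l) ≤ c)
    (r : ℕ → ℕ) (hr : ∀ n, r n = ⌊c * n⌋₊ ∨ r n = ⌈c * n⌉₊)
    (p : ℕ → ℝ) (hp01 : ∀ n, 0 ≤ p n ∧ p n ≤ 1)
    (hpeq : c = 1 / ((k : ℝ) - l) →
      ∀ n, 0 < n → p n ≤ (1 - ε) * Real.exp 1 ^ (k - l + 1) / (n : ℝ) ^ (k - l))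
    (hpgt : 1 / ((k : ℝ) - l) < c →
      ∀ n, 0 < n → p n ≤ (1 - ε) * ((c - 1 / ((k : ℝ) - l)) / c) ^ (((k : ℝ) - l) * c - 1) *
        Real.exp 1 ^ (k - l + 1) / (n : ℝ) ^ (k - l)) :
    Tendsto (fun n => hypProb k n (r n) (p n) {ω | ¬ HasRainbowHamCycle k l ω})
      atTop (nhds 1) :=
  rainbow_hamilton_zero_statement_general k l hkl ε hε c hc r hr p hp01 hpeq hpgt
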